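/- Let W be an algebraic Weyl curvature tensor on a Euclidean vector space V of dimension n ≥ 4 and h an endomorphism of V. If W(hF + Fh*) = W(F)h + h*W(F) holds for all skew-symmetric endomorphisms F, then h belongs to E_W, i.e. W(x,y,hz,·) + W(y,z,hx,·) + W(z,x,hy,·) = 0 for all x,y,z. -/
import Mathlib


/- Common setup: algebraic Weyl curvature tensors on a Euclidean vector space. -/

open scoped RealInnerProductSpace
open Finset

/-- A curvature-type 4-linear tensor on `V`. -/
abbrev Tensor4 (V : Type*) [NormedAddCommGroup V] [InnerProductSpace ℝ V] : Type _ :=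
  V →ₗ[ℝ] V →ₗ[ℝ] V →ₗ[ℝ] V →ₗ[ℝ] ℝ

variable {V : Type*} [NormedAddCommGroup V] [InnerProductSpace ℝ V] [FiniteDimensional ℝ V]

/-- `W` is an algebraic Weyl curvature tensor: it has the symmetries of a curvature
tensor, satisfies the first Bianchi identity, and is totally trace-free. -/
structure IsWeylTensor (W : Tensor4 V) : Prop where
  antisym₁ : ∀ x y z u, W x y z u = - W y x z u
  antisym₂ : ∀ x y z u, W x y z u = - W x y u z
  pair_symm : ∀ x y z u, W x y z u = W z u x y
  bianchi : ∀ x y z u, W x y z u + W y z x u + W z x y u = 0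
  trace_free : ∀ (b : OrthonormalBasis (Fin (Module.finrank ℝ V)) ℝ V) (x y : V),
      ∑ i, W x (b i) y (b i) = 0

/-- The extension of `W` to endomorphisms, `W(h) = Σᵢ W(eᵢ, ·, h eᵢ, ·)`,
viewed as a bilinear form (identified with an endomorphism via the metric). -/
noncomputable def weylExt {ι : Type*} [Fintype ι]
    (W : Tensor4 V) (b : OrthonormalBasis ι ℝ V) (h : V →ₗ[ℝ] V) (v w : V) : ℝ :=
  ∑ i, W (b i) v (h (b i)) w

/-- The space `E_W`: endomorphisms `h` with `W(x,y,hz,·) + W(y,z,hx,·) + W(z,x,hy,·) = 0`. -/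
def memE (W : Tensor4 V) (h : V →ₗ[ℝ] V) : Prop :=
  ∀ x y z u, W x y (h z) u + W y z (h x) u + W z x (h y) u = 0

/-- The Lie algebra `g_W` of the symmetry group of `W`. -/
def memG (W : Tensor4 V) (h : V →ₗ[ℝ] V) : Prop :=
  ∀ x y z u, W (h x) y z u + W x (h y) z u + W x y (h z) u + W x y z (h u) = 0

/-- Skew-symmetric endomorphisms (identified with 2-forms). -/
def IsSkew (F : V →ₗ[ℝ] V) : Prop := ∀ v w, ⟪F v, w⟫ = - ⟪v, F w⟫

/-- Symmetric endomorphisms. -/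
def IsSym (F : V →ₗ[ℝ] V) : Prop := ∀ v w, ⟪F v, w⟫ = ⟪v, F w⟫

/-- The bilinear form `g(F·,·)` associated to an endomorphism `F`. -/
noncomputable def form (F : V →ₗ[ℝ] V) (v w : V) : ℝ := ⟪F v, w⟫

/-- if `W(hF + Fh*) = W(F)h + h*W(F)` for all skew-symmetric `F`,
then `h ∈ E_W`. -/
theorem stmt4 (hn : 4 ≤ Module.finrank ℝ V) (W : Tensor4 V) (hW : IsWeylTensor W)
    (b : OrthonormalBasis (Fin (Module.finrank ℝ V)) ℝ V)
    (h : V →ₗ[ℝ] V)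
    (hyp : ∀ F : V →ₗ[ℝ] V, IsSkew F → ∀ v w,
      weylExt W b (h ∘ₗ F + F ∘ₗ LinearMap.adjoint h) v w
        = weylExt W b F (h v) w + weylExt W b F v (h w)) :
    memE W h := by
  classical
  -- Expansion of a sum over the orthonormal basis in the first slot of `W`.
  have expand : ∀ (c v d w : V), (∑ i, ⟪c, b i⟫ * W (b i) v d w) = W c v d w := by
    intro c v d w
    have hc : (∑ i, ⟪b i, c⟫ • b i) = c := b.sum_repr' c
    calc (∑ i, ⟪c, b i⟫ * W (b i) v d w)
        = ∑ i, ⟪b i, c⟫ * W (b i) v d w := by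
          refine Finset.sum_congr rfl fun i _ => ?_
          rw [real_inner_comm]
      _ = W (∑ i, ⟪b i, c⟫ • b i) v d w := by
          simp [map_sum, LinearMap.sum_apply, LinearMap.map_smul,
            LinearMap.smul_apply, smul_eq_mul]
      _ = W c v d w := by rw [hc]
  -- Key identity, obtained from the hypothesis with `F = x ∧ y`.
  have key : ∀ x y v w : V,
      W x v (h y) w + W (h x) v y w - W y v (h x) w - W (h y) v x w
        = W x (h v) y w - W y (h v) x w + (W x v y (h w) - W y v x (h w)) := by
    intro x y v w
    set F : V →ₗ[ℝ] V := (innerₛₗ ℝ x).smulRight y - (innerₛₗ ℝ y).smulRight x with hFdef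
    have hFapp : ∀ a : V, F a = ⟪x, a⟫ • y - ⟪y, a⟫ • x := fun a => rfl
    have hskew : IsSkew F := by
      intro a c
      rw [hFapp, hFapp]
      simp only [inner_sub_left, inner_sub_right, real_inner_smul_left,
        real_inner_smul_right]
      rw [real_inner_comm a x, real_inner_comm a y]
      ring
    have H := hyp F hskew v w
    have e1 : weylExt W b ((h ∘ₗ F) + F ∘ₗ LinearMap.adjoint h) v w
        = W x v (h y) w - W y v (h x) w + (W (h x) v y w - W (h y) v x w) := by
      unfold weylExt
      have hterm : ∀ i, W (b i) v (((h ∘ₗ F) + F ∘ₗ LinearMap.adjoint h) (b i)) w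
          = (⟪x, b i⟫ * W (b i) v (h y) w - ⟪y, b i⟫ * W (b i) v (h x) w)
            + (⟪h x, b i⟫ * W (b i) v y w - ⟪h y, b i⟫ * W (b i) v x w) := by
        intro i
        have h1 : ((h ∘ₗ F) + F ∘ₗ LinearMap.adjoint h) (b i)
            = (⟪x, b i⟫ • h y - ⟪y, b i⟫ • h x)
              + (⟪h x, b i⟫ • y - ⟪h y, b i⟫ • x) := by
          simp only [LinearMap.add_apply, LinearMap.comp_apply, hFapp, map_sub,
            map_smul, LinearMap.adjoint_inner_right]
        rw [h1]
        simp only [map_add, map_sub, map_smul, LinearMap.add_apply,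
          LinearMap.sub_apply, LinearMap.smul_apply, smul_eq_mul]
      rw [Finset.sum_congr rfl fun i _ => hterm i, Finset.sum_add_distrib,
        Finset.sum_sub_distrib, Finset.sum_sub_distrib,
        expand, expand, expand, expand]
    have e2 : weylExt W b F (h v) w = W x (h v) y w - W y (h v) x w := by
      unfold weylExt
      have hterm : ∀ i, W (b i) (h v) (F (b i)) w
          = ⟪x, b i⟫ * W (b i) (h v) y w - ⟪y, b i⟫ * W (b i) (h v) x w := by
        intro i
        rw [hFapp]
        simp only [map_sub, map_smul, LinearMap.sub_apply, LinearMap.smul_apply,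
          smul_eq_mul]
      rw [Finset.sum_congr rfl fun i _ => hterm i, Finset.sum_sub_distrib,
        expand, expand]
    have e3 : weylExt W b F v (h w) = W x v y (h w) - W y v x (h w) := by
      unfold weylExt
      have hterm : ∀ i, W (b i) v (F (b i)) (h w)
          = ⟪x, b i⟫ * W (b i) v y (h w) - ⟪y, b i⟫ * W (b i) v x (h w) := by
        intro i
        rw [hFapp]
        simp only [map_sub, map_smul, LinearMap.sub_apply, LinearMap.smul_apply,
          smul_eq_mul]
      rw [Finset.sum_congr rfl fun i _ => hterm i, Finset.sum_sub_distrib,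
        expand, expand]
    rw [e1, e2, e3] at H
    linarith
  -- Symmetrized form of the key identity.
  have hstar : ∀ x y v w : V,
      W x v (h y) w + W x v (h w) y + (W y w (h x) v + W y w (h v) x)
        - (W y v (h x) w + W y v (h w) x)
        - (W x w (h y) v + W x w (h v) y) = 0 := by
    intro x y v w
    have k := key x y v w
    have c1 : W (h x) v y w = W y w (h x) v := hW.pair_symm _ _ _ _
    have c2 : W (h y) v x w = W x w (h y) v := hW.pair_symm _ _ _ _
    have c3 : W x (h v) y w = - W y w (h v) x :=
      (hW.pair_symm _ _ _ _).trans (hW.antisym₂ _ _ _ _)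
    have c4 : W y (h v) x w = - W x w (h v) y :=
      (hW.pair_symm _ _ _ _).trans (hW.antisym₂ _ _ _ _)
    have c5 : W x v y (h w) = - W x v (h w) y := hW.antisym₂ _ _ _ _
    have c6 : W y v x (h w) = - W y v (h w) x := hW.antisym₂ _ _ _ _
    linarith
  -- Conclusion.
  intro x y z u
  have hb := hW.bianchi x y z (h u)
  have b1 : W x y (h u) z = - W x y z (h u) := hW.antisym₂ _ _ _ _
  have b2 : W y z (h u) x = - W y z x (h u) := hW.antisym₂ _ _ _ _
  have b3' : W z x (h u) y = - W z x y (h u) := hW.antisym₂ _ _ _ _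
  have a0 : W x z (h u) y = - W z x (h u) y := hW.antisym₁ _ _ _ _
  have a1 : W z y (h x) u = - W y z (h x) u := hW.antisym₁ _ _ _ _
  have a2 : W x z (h y) u = - W z x (h y) u := hW.antisym₁ _ _ _ _
  have a3 : W u z (h x) y = - W z u (h x) y := hW.antisym₁ _ _ _ _
  have a4 : W u z (h y) x = - W z u (h y) x := hW.antisym₁ _ _ _ _
  have a5 : W u y (h x) z = - W y u (h x) z := hW.antisym₁ _ _ _ _
  have a6 : W u y (h z) x = - W y u (h z) x := hW.antisym₁ _ _ _ _
  have a7 : W z y (h u) x = - W y z (h u) x := hW.antisym₁ _ _ _ _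
  have a8 : W x z (h u) y = - W z x (h u) y := hW.antisym₁ _ _ _ _
  have s1 := hstar x z y u
  have s2 := hstar x u y z
  have s3 := hstar x y z u
  linarith
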